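/- Let $X$ be a Banach space and $f : [a,b] \to X$ differentiable with $\|f'(t)\| \le M$ for $t \in [a,b]$. Then the Simpson rule error satisfies $\left\| \int_a^b f(t)\,dt - \frac{b-a}{3}\left[\frac{f(a)+f(b)}{2} + 2 f\left(\frac{a+b}{2}\right)\right] \right\| \le \frac{5}{36}(b-a)^2 M$. -/

import Mathlib

/-!
Simpson's rule on `[a, b]` is the sum of two-point rules on the halves `[a, m]` and `[m, b]`,
`m = (a + b) / 2`. A two-point rule on `[u, v]` with weights `c - u` and `v - c` has error
`-∫ (t - c) • f' t` (integration by parts), hence error at most `M ∫ |t - c| =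
M ((c - u)² + (v - c)²) / 2`. Splitting each half at one third of its length gives
`2 · ((b - a)² / 36 + (b - a)² / 9) / 2 = 5 (b - a)² / 36`.
-/

open MeasureTheory intervalIntegral Set
open scoped Interval

section TwoPointRule

variable {X : Type*} [NormedAddCommGroup X] [NormedSpace ℝ X] [CompleteSpace X]

theorem intervalIntegrable_of_hasDerivAt_of_norm_le {f f' : ℝ → X} {u v M : ℝ}
    (hderiv : ∀ t ∈ [[u, v]], HasDerivAt f (f' t) t) (hM : ∀ t ∈ [[u, v]], ‖f' t‖ ≤ M) :
    IntervalIntegrable f' volume u v := by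
  have hae : ∀ᵐ t ∂volume.restrict (Ι u v), t ∈ [[u, v]] :=
    (ae_restrict_mem measurableSet_uIoc).mono fun t ht => uIoc_subset_uIcc ht
  refine intervalIntegrable_const.mono_fun' ?_ (hae.mono fun t ht => hM t ht)
  exact (aestronglyMeasurable_deriv f _).congr (hae.mono fun t ht => (hderiv t ht).deriv)

theorem integral_sub_two_point_eq {f f' : ℝ → X} {u v : ℝ} (c : ℝ)
    (hderiv : ∀ t ∈ [[u, v]], HasDerivAt f (f' t) t) (hf' : IntervalIntegrable f' volume u v) :
    (∫ t in u..v, f t) - (c - u) • f u - (v - c) • f v = -∫ t in u..v, (t - c) • f' t := by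
  have hparts := integral_smul_deriv_eq_deriv_smul (u := fun t => t - c) (u' := fun _ => (1 : ℝ))
    (fun t _ => (hasDerivAt_id t).sub_const c) hderiv intervalIntegrable_const hf'
  simp only [one_smul] at hparts
  rw [hparts]
  module

theorem integral_abs_sub_of_le {u v c : ℝ} (huc : u ≤ c) (hcv : c ≤ v) :
    ∫ t in u..v, |t - c| = ((c - u) ^ 2 + (v - c) ^ 2) / 2 := by
  have hint : ∀ p q : ℝ, IntervalIntegrable (fun t => |t - c|) volume p q := fun p q =>
    (continuous_abs.comp (continuous_sub_right c)).intervalIntegrable p q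
  have hcu := integral_pow_abs_sub_uIoc (a := c) (b := u) (n := 1)
  have hcv' := integral_pow_abs_sub_uIoc (a := c) (b := v) (n := 1)
  rw [uIoc_comm, uIoc_of_le huc, ← integral_of_le huc] at hcu
  rw [uIoc_of_le hcv, ← integral_of_le hcv] at hcv'
  simp only [pow_one] at hcu hcv'
  rw [← integral_add_adjacent_intervals (hint u c) (hint c v), hcu, hcv', sq_abs, sq_abs]
  ring

theorem norm_integral_sub_two_point_le {f f' : ℝ → X} {u v c M : ℝ}
    (huc : u ≤ c) (hcv : c ≤ v)
    (hderiv : ∀ t ∈ Icc u v, HasDerivAt f (f' t) t) (hM : ∀ t ∈ Icc u v, ‖f' t‖ ≤ M) :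
    ‖(∫ t in u..v, f t) - (c - u) • f u - (v - c) • f v‖ ≤
      M * (((c - u) ^ 2 + (v - c) ^ 2) / 2) := by
  have huv : u ≤ v := huc.trans hcv
  have hf' : IntervalIntegrable f' volume u v := by
    rw [← uIcc_of_le huv] at hderiv hM
    exact intervalIntegrable_of_hasDerivAt_of_norm_le hderiv hM
  rw [integral_sub_two_point_eq c (by rwa [uIcc_of_le huv]) hf', norm_neg,
    ← integral_abs_sub_of_le huc hcv, ← intervalIntegral.integral_const_mul]
  refine norm_integral_le_of_norm_le huv (ae_of_all _ fun t ht => ?_)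
    ((continuous_const.mul (continuous_abs.comp (continuous_sub_right c))).intervalIntegrable u v)
  rw [norm_smul, Real.norm_eq_abs, mul_comm]
  exact mul_le_mul_of_nonneg_right (hM t (Ioc_subset_Icc_self ht)) (abs_nonneg _)

end TwoPointRule

theorem stmt18 {X : Type*} [NormedAddCommGroup X] [NormedSpace ℝ X] [CompleteSpace X]
    {a b : ℝ} (hab : a < b) {f f' : ℝ → X}
    (hderiv : ∀ t ∈ Set.Icc a b, HasDerivAt f (f' t) t)
    {M : ℝ} (hM : ∀ t ∈ Set.Icc a b, ‖f' t‖ ≤ M) :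
    ‖(∫ t in a..b, f t) - ((b - a) / 3) • ((2 : ℝ)⁻¹ • (f a + f b) + (2 : ℝ) • f ((a + b) / 2))‖ ≤
      (5 / 36) * (b - a) ^ 2 * M := by
  set m := (a + b) / 2 with hm
  have ham : a ≤ m := by linarith
  have hmb : m ≤ b := by linarith
  have hsub_left : Icc a m ⊆ Icc a b := Icc_subset_Icc_right hmb
  have hsub_right : Icc m b ⊆ Icc a b := Icc_subset_Icc_left ham
  have hleft := norm_integral_sub_two_point_le (c := a + (b - a) / 6) (by linarith) (by linarith)
    (fun t ht => hderiv t (hsub_left ht)) (fun t ht => hM t (hsub_left ht))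
  have hright := norm_integral_sub_two_point_le (c := b - (b - a) / 6) (by linarith) (by linarith)
    (fun t ht => hderiv t (hsub_right ht)) (fun t ht => hM t (hsub_right ht))
  have hcont : ContinuousOn f (Icc a b) := fun t ht => (hderiv t ht).continuousAt.continuousWithinAt
  have hsplit := integral_add_adjacent_intervals
    ((hcont.mono hsub_left).intervalIntegrable_of_Icc (μ := volume) ham)
    ((hcont.mono hsub_right).intervalIntegrable_of_Icc hmb)
  calc _ = ‖((∫ t in a..m, f t) - (a + (b - a) / 6 - a) • f a - (m - (a + (b - a) / 6)) • f m)
        + ((∫ t in m..b, f t) - (b - (b - a) / 6 - m) • f m - (b - (b - (b - a) / 6)) • f b)‖ := by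
        rw [← hsplit, hm]; congr 1; match_scalars <;> ring
    _ ≤ _ := (norm_add_le _ _).trans (add_le_add hleft hright)
    _ = _ := by rw [hm]; ring
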